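/- arXiv:2410.23611 — 2 statements merged into one kernel-verified Lean document; each statement's English description precedes it below -/
import Mathlib

section
/- Let r ≥ 3, r-1 divides k+1, and t = ⌈(r-2)k/(r-1)⌉. Suppose n ≥ max{k, binom(k, k−t)·t + t − 1} and there exists an (n,k,t)-design, i.e., a family of k-subsets of [n] of size binom(n,t)/binom(k,t) in which every two distinct members intersect in fewer than t elements. Then the maximum size of an r-focal-free k-uniform hypergraph on [n] equals binom(n,t)/binom(k,t). -/
open Finset

/-- A family of finsets is `r`-focal-free if it contains no `r` distinct sets
`A 0, A 1, ..., A (r-1)` such that every element of the focus `A 0` belongs to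
at least `r - 2` of the other sets. -/
def IsFocalFree (r : ℕ) {α : Type*} [DecidableEq α] (F : Finset (Finset α)) : Prop :=
  ¬ ∃ (A₀ : Finset α) (A : Fin (r - 1) → Finset α), A₀ ∈ F ∧ (∀ i, A i ∈ F) ∧
      Function.Injective A ∧ (∀ i, A i ≠ A₀) ∧
      ∀ x ∈ A₀, r - 2 ≤ (Finset.univ.filter fun i : Fin (r - 1) => x ∈ A i).card

/-!
Lower bound: if `A₀` were a focus of `A 1, …, A (r-1)` in a design, counting incidences gives
`(r-2)k ≤ ∑ #(A₀ ∩ A i) ≤ (r-1)(t-1) = (r-2)k - 1`.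

Upper bound: count the `t`-sets by their degree (the number of members containing them). A member
sharing a `t`-set with another one owns a `(t-1)`-set contained in no other member (found inside a
maximal chain of members with pairwise disjoint differences, which focal-freeness keeps short).
Completing that private set by a point outside the member gives `n - k` uncovered `t`-sets, and
the assumption on `n` makes these pay for all the multiply covered `t`-sets of the member.
-/

variable {α : Type*} [DecidableEq α]

theorem isFocalFree_of_card_inter_lt {r k t : ℕ} {F : Finset (Finset α)}
    (hk : ∀ A ∈ F, #A = k) (hF : ∀ A ∈ F, ∀ B ∈ F, A ≠ B → #(A ∩ B) < t)
    (h : (r - 1) * (t - 1) < (r - 2) * k) : IsFocalFree r F := by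
  rintro ⟨A₀, A, hA₀, hA, -, hne, hcov⟩
  have hdouble : #A₀ * (r - 2) ≤ #(univ : Finset (Fin (r - 1))) * (t - 1) :=
    card_mul_le_card_mul (fun x i => x ∈ A i) hcov fun i _ => by
      have := hF A₀ hA₀ (A i) (hA i) (hne i).symm
      rw [bipartiteBelow, filter_mem_eq_inter]
      omega
  rw [hk A₀ hA₀, card_univ, Fintype.card_fin] at hdouble
  linarith

namespace IsFocalFree

theorem card_lt_of_pairwiseDisjoint {r : ℕ} {F s : Finset (Finset α)} {B : Finset α}
    (hF : IsFocalFree r F) (hB : B ∈ F) (hs : s ⊆ F.erase B)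
    (hdisj : (s : Set (Finset α)).PairwiseDisjoint (B \ ·)) : #s < r - 1 := by
  by_contra! hrs
  obtain ⟨s', hs's, hcard⟩ := exists_subset_card_eq hrs
  set A : Fin (r - 1) → Finset α := fun i => (equivFinOfCardEq hcard).symm i
  have hAs (i) : A i ∈ s := hs's (Subtype.prop _)
  have hAinj : Function.Injective A := Subtype.val_injective.comp (Equiv.injective _)
  refine hF ⟨B, A, hB, fun i => mem_of_mem_erase (hs (hAs i)), hAinj,
    fun i => ne_of_mem_erase (hs (hAs i)), fun x hx => ?_⟩
  have hmiss : #{i | x ∉ A i} ≤ 1 := card_le_one.2 fun i hi j hj => by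
    by_contra hij
    exact disjoint_left.1 (hdisj (hAs i) (hAs j) (hAinj.ne hij))
      (mem_sdiff.2 ⟨hx, (mem_filter.1 hi).2⟩) (mem_sdiff.2 ⟨hx, (mem_filter.1 hj).2⟩)
  have := card_filter_add_card_filter_not (s := univ) (fun i => x ∈ A i)
  rw [card_univ, Fintype.card_fin] at this
  omega

end IsFocalFree

namespace FocalFree

def degree (F : Finset (Finset α)) (T : Finset α) : ℕ := #{A ∈ F | T ⊆ A}

def IsPrivate (F : Finset (Finset α)) (S B : Finset α) : Prop :=
  S ⊆ B ∧ ∀ C ∈ F, S ⊆ C → C = B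

def IsDefectChain (F : Finset (Finset α)) (B : Finset α) (m : ℕ) (s : Finset (Finset α)) :
    Prop :=
  s ⊆ F.erase B ∧ (s : Set (Finset α)).PairwiseDisjoint (B \ ·) ∧ #(s.biUnion (B \ ·)) < #s * m

variable {F s : Finset (Finset α)} {B C S : Finset α} {k m t : ℕ}

theorem exists_ne_subset_of_two_le_degree (h : 2 ≤ degree F S) : ∃ C ∈ F, C ≠ B ∧ S ⊆ C := by
  obtain ⟨C, hC, hCB⟩ := exists_mem_ne h B
  exact ⟨C, (mem_filter.1 hC).1, hCB, (mem_filter.1 hC).2⟩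

theorem IsDefectChain.singleton (hC : C ∈ F) (hCB : C ≠ B) (hm : #(B \ C) < m) :
    IsDefectChain F B m {C} :=
  ⟨singleton_subset_iff.2 (mem_erase.2 ⟨hCB, hC⟩), by simp, by simpa using hm⟩

theorem IsDefectChain.insert (hs : IsDefectChain F B m s) (hC : C ∈ F) (hCB : C ≠ B)
    (hUC : s.biUnion (B \ ·) ⊆ C) (hm : #(B \ C) ≤ m) (hCs : C ∉ s) :
    IsDefectChain F B m (insert C s) := by
  obtain ⟨hsF, hdisj, hcard⟩ := hs
  refine ⟨insert_subset (mem_erase.2 ⟨hCB, hC⟩) hsF, ?_, ?_⟩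
  · rw [coe_insert]
    refine hdisj.insert fun D hD _ => sdiff_disjoint.mono_right ?_
    exact (subset_biUnion_of_mem (B \ ·) hD).trans hUC
  · rw [biUnion_insert, card_insert_of_notMem hCs, add_mul, one_mul]
    have := card_union_le (B \ C) (s.biUnion (B \ ·))
    omega

theorem _root_.IsFocalFree.card_le_of_isDefectChain {r : ℕ} (hF : IsFocalFree r F) (hB : B ∈ F)
    (hs : IsDefectChain F B m s) : #s ≤ r - 2 := by
  have := hF.card_lt_of_pairwiseDisjoint hB hs.1 hs.2.1
  omega

/-- `S` is any `(t-1)`-subset of `B` containing the defects `B \ C` of a maximal defect chain.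
These cover fewer than `(r - 2) * m = t` points, as focal-freeness bounds the length of the chain
by `r - 2`, and a further member containing `S` would extend the chain. -/
theorem _root_.IsFocalFree.exists_isPrivate {r : ℕ} (hF : IsFocalFree r F)
    (hk : ∀ A ∈ F, #A = k) (hkt : t + m = k + 1) (htm : t = (r - 2) * m)
    (hB : B ∈ F) (hC : C ∈ F) (hCB : C ≠ B) (hBC : t ≤ #(B ∩ C)) :
    ∃ S, IsPrivate F S B ∧ #S + 1 = t := by
  classical
  have hBk := hk B hB
  obtain ⟨s, hs, hmax⟩ := ((F.erase B).powerset.filter (IsDefectChain F B m)).exists_max_image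
    card ⟨{C}, mem_filter.2 ⟨by simpa using mem_erase.2 ⟨hCB, hC⟩, .singleton hC hCB (by
      have := card_sdiff_add_card_inter B C; omega)⟩⟩
  replace hs := (mem_filter.1 hs).2
  have hst : #(s.biUnion (B \ ·)) < t := by
    have := Nat.mul_le_mul_right m (hF.card_le_of_isDefectChain hB hs)
    have := hs.2.2
    rw [htm]; omega
  obtain ⟨S, hUS, hSB, hS⟩ := exists_subsuperset_card_eq (biUnion_subset.2 fun _ _ => sdiff_subset)
    (Nat.le_sub_one_of_lt hst) (show t - 1 ≤ #B by omega)
  refine ⟨S, ⟨hSB, fun D hD hSD => ?_⟩, by omega⟩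
  by_contra hDB
  have hUD := hUS.trans hSD
  have hDs : D ∉ s := fun hDs => by
    have hBD : B \ D ⊆ D := (subset_biUnion_of_mem (B \ ·) hDs).trans hUD
    have : B ⊆ D := fun x hx => by_contra fun hxD => hxD (hBD (mem_sdiff.2 ⟨hx, hxD⟩))
    exact hDB (eq_of_subset_of_card_le this (by rw [hk D hD, hBk])).symm
  have hdefect : #(B \ D) ≤ m := by
    have := card_le_card (subset_inter hSB hSD)
    have := card_sdiff_add_card_inter B D
    omega
  have := hmax _ (mem_filter.2 ⟨mem_powerset.2 (insert_subset (mem_erase.2 ⟨hDB, hD⟩) hs.1),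
    hs.insert hD hDB hUD hdefect hDs⟩)
  rw [card_insert_of_notMem hDs] at this
  omega

theorem IsPrivate.degree_insert_of_mem (hS : IsPrivate F S B) (hB : B ∈ F) {b : α} (hb : b ∈ B) :
    degree F (insert b S) = 1 := by
  rw [degree, card_eq_one]
  refine ⟨B, eq_singleton_iff_unique_mem.2 ⟨mem_filter.2 ⟨hB, insert_subset hb hS.1⟩, ?_⟩⟩
  exact fun C hC => hS.2 C (mem_filter.1 hC).1 ((subset_insert b S).trans (mem_filter.1 hC).2)

theorem IsPrivate.degree_insert_of_notMem (hS : IsPrivate F S B) {x : α} (hx : x ∉ B) :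
    degree F (insert x S) = 0 := by
  rw [degree, card_eq_zero, filter_eq_empty_iff]
  intro C hC hxSC
  exact hx (hS.2 C hC ((subset_insert x S).trans hxSC) ▸ hxSC (mem_insert_self x S))

variable [Fintype α]

theorem sum_degree_powersetCard (hk : ∀ A ∈ F, #A = k) :
    ∑ T ∈ powersetCard t univ, degree F T = #F * k.choose t := by
  change ∑ T ∈ _, #(F.bipartiteAbove (· ⊆ ·) T) = _
  rw [sum_card_bipartiteAbove_eq_sum_card_bipartiteBelow, ← smul_eq_mul, ← sum_const]
  refine sum_congr rfl fun A hA => ?_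
  have : {T ∈ powersetCard t (univ : Finset α) | T ⊆ A} = powersetCard t A := by
    ext T; simp [and_comm]
  rw [bipartiteBelow, this, card_powersetCard, hk A hA]

theorem IsPrivate.card_filter_two_le_degree_le (hS : IsPrivate F S B) (hB : B ∈ F)
    (hSt : #S + 1 = t) (htB : t ≤ #B) :
    #{T ∈ powersetCard t univ | 2 ≤ degree F T ∧ T ⊆ B} ≤ (#B).choose t - 1 := by
  obtain ⟨b, hb⟩ : (B \ S).Nonempty := by
    rw [← card_pos, card_sdiff_of_subset hS.1]; omega
  obtain ⟨hbB, hbS⟩ := mem_sdiff.1 hb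
  have hown := hS.degree_insert_of_mem hB hbB
  calc #{T ∈ powersetCard t univ | 2 ≤ degree F T ∧ T ⊆ B}
      ≤ #((powersetCard t B).erase (insert b S)) := card_le_card fun T hT => by
        simp only [mem_filter, mem_powersetCard] at hT
        exact mem_erase.2 ⟨by rintro rfl; omega, mem_powersetCard.2 ⟨hT.2.2, hT.1.2⟩⟩
    _ = (#B).choose t - 1 := by
        rw [card_erase_of_mem (mem_powersetCard.2 ⟨insert_subset hbB hS.1,
          by rw [card_insert_of_notMem hbS, hSt]⟩), card_powersetCard]

/-- Each `B ∈ P` yields `card α - #B` uncovered `t`-sets `insert x (S B)`, `x ∉ B`, and an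
uncovered `t`-set arises in this way from at most `t` members, since `S B` determines `B`. -/
theorem card_mul_le_card_filter_degree_eq_zero {P : Finset (Finset α)}
    {S : Finset α → Finset α} (ht : 0 < t) (hk : ∀ A ∈ F, #A = k) (hP : P ⊆ F)
    (hS : ∀ B ∈ P, IsPrivate F (S B) B ∧ #(S B) + 1 = t) :
    #P * (Fintype.card α - k) ≤ #{T ∈ powersetCard t univ | degree F T = 0} * t := by
  refine card_mul_le_card_mul (fun B T => S B ⊆ T) (fun B hB => ?_) (fun T hT => ?_)
  · have hSB := (hS B hB).1
    rw [← hk B (hP hB), ← card_compl]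
    refine card_le_card_of_injOn (insert · (S B)) (fun x hx => ?_) (fun x hx y hy hxy => ?_)
    · have hxB : x ∉ B := mem_compl.1 hx
      have hxS : x ∉ S B := fun h => hxB (hSB.1 h)
      simp only [mem_coe, bipartiteAbove, mem_filter, mem_powersetCard]
      exact ⟨⟨⟨subset_univ _, by rw [card_insert_of_notMem hxS, (hS B hB).2]⟩,
        hSB.degree_insert_of_notMem hxB⟩, subset_insert x (S B)⟩
    · exact (insert_inj fun h => mem_compl.1 hx ((hS B hB).1.1 h)).1 hxy
  · have hTt : #T = t := (mem_powersetCard.1 (mem_filter.1 hT).1).2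
    calc #(P.bipartiteBelow (fun B T => S B ⊆ T) T) ≤ #(powersetCard (t - 1) T) := by
          refine card_le_card_of_injOn S (fun B hB => ?_) (fun B₁ hB₁ B₂ hB₂ h => ?_)
          · have hB := mem_filter.1 hB
            exact mem_powersetCard.2 ⟨hB.2, by have := (hS B hB.1).2; omega⟩
          · have h₁ := hS B₁ (mem_filter.1 hB₁).1
            have h₂ := hS B₂ (mem_filter.1 hB₂).1
            exact h₂.1.2 B₁ (hP (mem_filter.1 hB₁).1) (h ▸ h₁.1.1)
      _ = t := by
          obtain ⟨t, rfl⟩ := Nat.exists_eq_add_one_of_ne_zero ht.ne'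
          rw [card_powersetCard, hTt, Nat.add_sub_cancel, Nat.choose_succ_self_right]

/-- The `t`-sets of degree `≥ 2` lie in members `P` with a private `(t-1)`-set, each containing at
most `C(k,t) - 1` of them (one of its `t`-sets has degree `1`), and by `hn` the members of `P`
leave at least `#P * (C(k,t) - 1)` sets of degree `0`. -/
theorem card_mul_choose_le_of_isPrivate (hk : ∀ A ∈ F, #A = k) (ht : 0 < t) (htk : t ≤ k)
    (hn : t * (k.choose t - 1) + k ≤ Fintype.card α)
    (hpriv : ∀ B ∈ F, ∀ T, 2 ≤ degree F T → T ⊆ B → #T = t → ∃ S, IsPrivate F S B ∧ #S + 1 = t) :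
    #F * k.choose t ≤ (Fintype.card α).choose t := by
  set 𝒯 := powersetCard t (univ : Finset α)
  set 𝒮 := {T ∈ 𝒯 | 2 ≤ degree F T}
  set P := {B ∈ F | ∃ T ∈ 𝒮, T ⊆ B}
  have hP : ∀ B ∈ P, ∃ S, IsPrivate F S B ∧ #S + 1 = t := fun B hB => by
    obtain ⟨hBF, T, hT, hTB⟩ := mem_filter.1 hB
    obtain ⟨hT𝒯, hT2⟩ := mem_filter.1 hT
    exact hpriv B hBF T hT2 hTB (mem_powersetCard.1 hT𝒯).2
  choose! S hS using hP
  have hsplit : ∑ T ∈ 𝒯, degree F T = #{T ∈ 𝒯 | degree F T = 1} + ∑ T ∈ 𝒮, degree F T := by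
    rw [card_filter, sum_filter, ← sum_add_distrib]
    exact sum_congr rfl fun T _ => by split_ifs <;> omega
  have hshared : ∑ T ∈ 𝒮, degree F T ≤ #P * (k.choose t - 1) := by
    have hrestrict : ∑ B ∈ P, #{T ∈ 𝒮 | T ⊆ B} = ∑ B ∈ F, #{T ∈ 𝒮 | T ⊆ B} :=
      sum_filter_of_ne fun B hBF h => by
        obtain ⟨T, hT⟩ := card_ne_zero.1 h
        exact ⟨T, (mem_filter.1 hT).1, (mem_filter.1 hT).2⟩
    change ∑ T ∈ 𝒮, #(F.bipartiteAbove (· ⊆ ·) T) ≤ _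
    rw [sum_card_bipartiteAbove_eq_sum_card_bipartiteBelow]
    change ∑ B ∈ F, #{T ∈ 𝒮 | T ⊆ B} ≤ _
    rw [← hrestrict, ← smul_eq_mul]
    refine sum_le_card_nsmul _ _ _ fun B hB => ?_
    have hBF := (mem_filter.1 hB).1
    have := (hS B hB).1.card_filter_two_le_degree_le hBF (hS B hB).2 (by rwa [hk B hBF])
    rwa [hk B hBF, ← filter_filter] at this
  have huncovered : #P * (k.choose t - 1) ≤ #{T ∈ 𝒯 | degree F T = 0} := by
    refine Nat.le_of_mul_le_mul_right ?_ ht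
    calc #P * (k.choose t - 1) * t = #P * (t * (k.choose t - 1)) := by ring
      _ ≤ #P * (Fintype.card α - k) := Nat.mul_le_mul_left _ (by omega)
      _ ≤ #{T ∈ 𝒯 | degree F T = 0} * t :=
        card_mul_le_card_filter_degree_eq_zero ht hk (fun B hB => (mem_filter.1 hB).1) hS
  have hcover : #{T ∈ 𝒯 | degree F T = 0} + #{T ∈ 𝒯 | degree F T = 1} ≤ #𝒯 := by
    rw [← card_union_of_disjoint (disjoint_filter.2 fun T _ h => by omega)]
    exact card_le_card (union_subset (filter_subset _ _) (filter_subset _ _))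
  have htotal : ∑ T ∈ 𝒯, degree F T = #F * k.choose t := sum_degree_powersetCard hk
  have h𝒯 : #𝒯 = (Fintype.card α).choose t := by rw [card_powersetCard, card_univ]
  omega

theorem _root_.IsFocalFree.card_mul_choose_le {r m : ℕ} (hF : IsFocalFree r F)
    (hk : ∀ A ∈ F, #A = k) (hkt : t + m = k + 1) (htm : t = (r - 2) * m) (ht : 0 < t)
    (hn : t * (k.choose t - 1) + k ≤ Fintype.card α) :
    #F * k.choose t ≤ (Fintype.card α).choose t := by
  have hm : m ≠ 0 := by rintro rfl; omega
  refine card_mul_choose_le_of_isPrivate hk ht (by omega) hn fun B hB T hT hTB hTt => ?_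
  obtain ⟨C, hC, hCB, hTC⟩ := exists_ne_subset_of_two_le_degree (B := B) hT
  exact hF.exists_isPrivate hk hkt htm hB hC hCB (hTt ▸ card_le_card (subset_inter hTB hTC))

end FocalFree

theorem focal_free_exact_from_design_general {n k r t : ℕ} (hr : 3 ≤ r)
    (hdvd : (r - 1) ∣ (k + 1))
    (ht : t = ((r - 2) * k + r - 2) / (r - 1))
    (hn2 : k.choose (k - t) * t + t - 1 ≤ n)
    (hdesign : ∃ D : Finset (Finset (Fin n)), (∀ A ∈ D, A.card = k) ∧
      (∀ A ∈ D, ∀ B ∈ D, A ≠ B → (A ∩ B).card < t) ∧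
      D.card * k.choose t = n.choose t) :
    IsGreatest {c : ℕ | ∃ F : Finset (Finset (Fin n)),
        (∀ A ∈ F, A.card = k) ∧ IsFocalFree r F ∧ F.card = c}
      (n.choose t / k.choose t) := by
  obtain ⟨m, hm⟩ := hdvd
  have hrt : (r - 1) * t = (r - 2) * (k + 1) := by
    rw [ht, show (r - 2) * k + r - 2 = (r - 2) * (k + 1) by rw [mul_add_one]; omega,
      hm, mul_left_comm, Nat.mul_div_cancel_left _ (by omega)]
  have htm : t = (r - 2) * m := by
    refine Nat.eq_of_mul_eq_mul_left (show 0 < r - 1 by omega) ?_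
    rw [hrt, hm]; ring
  have hm0 : 0 < m := Nat.pos_of_ne_zero (by rintro rfl; omega)
  have hmt : m ≤ t := htm ▸ Nat.le_mul_of_pos_left m (by omega)
  have hkt : t + m = k + 1 := by
    rw [hm, htm, show r - 1 = r - 2 + 1 by omega]; ring
  have hC : 0 < k.choose t := Nat.choose_pos (by omega)
  obtain ⟨D, hDk, hDinter, hDcard⟩ := hdesign
  refine ⟨⟨D, hDk, isFocalFree_of_card_inter_lt hDk hDinter ?_, ?_⟩, ?_⟩
  · obtain ⟨s, rfl⟩ : ∃ s, t = s + 1 := ⟨t - 1, by omega⟩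
    rw [Nat.add_sub_cancel]
    rw [mul_add_one, mul_add_one] at hrt
    omega
  · rw [← hDcard, Nat.mul_div_cancel _ hC]
  · rintro _ ⟨F, hFk, hF, rfl⟩
    rw [Nat.le_div_iff_mul_le hC]
    have hchoose : t * (k.choose t - 1) + t = k.choose t * t := by
      rw [mul_comm, Nat.sub_one_mul, Nat.sub_add_cancel (Nat.le_mul_of_pos_left t hC)]
    rw [Nat.choose_symm (by omega)] at hn2
    simpa using hF.card_mul_choose_le hFk hkt htm (by omega) (by rw [Fintype.card_fin]; omega)

/-- With an (n,k,t)-design, the maximum size of an r-focal-free k-uniform hypergraph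
on [n] is exactly binom(n,t)/binom(k,t). -/
theorem focal_free_exact_from_design {n k r t : ℕ} (hr : 3 ≤ r) (hk : 2 ≤ k)
    (hdvd : (r - 1) ∣ (k + 1))
    (ht : t = ((r - 2) * k + r - 2) / (r - 1))
    (hn1 : k ≤ n) (hn2 : k.choose (k - t) * t + t - 1 ≤ n)
    (hdesign : ∃ D : Finset (Finset (Fin n)), (∀ A ∈ D, A.card = k) ∧
      (∀ A ∈ D, ∀ B ∈ D, A ≠ B → (A ∩ B).card < t) ∧
      D.card * k.choose t = n.choose t) :
    IsGreatest {c : ℕ | ∃ F : Finset (Finset (Fin n)),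
        (∀ A ∈ F, A.card = k) ∧ IsFocalFree r F ∧ F.card = c}
      (n.choose t / k.choose t) :=
  focal_free_exact_from_design_general hr hdvd ht hn2 hdesign
end

section
/- Let r ≥ 3, n ≥ 2, t = ⌈(r-2)n/(r-1)⌉, and λ ∈ [r-1] with n + λ ≡ 0 (mod r-1). Let C ⊆ [q]^n be an r-focal-free code and let C₀ be the set of codewords x ∈ C such that every (t-1)-subsequence of x is a non-own subsequence (i.e., for every T ∈ binom([n], t-1) there is y ∈ C, y ≠ x, with x_T = y_T). Then every x ∈ C₀ has at least binom(n,t) − m(n, n−t, λ) own t-subsequences: sets T ∈ binom([n],t) such that no y ∈ C \ {x} satisfies y_T = x_T. -/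
/-!
Write `n + λ = k (r - 1)`, so that `t = n + 1 - k`. If `T` is a non-own `t`-set, some other codeword
differs from `x` only on the `(k - 1)`-set `Tᶜ`; the complements of the non-own `t`-sets thus form a
`(k - 1)`-uniform hypergraph. Were there `λ` disjoint edges, the remaining
`n - λ (k - 1) = (r - 1 - λ) k` coordinates would split into `r - 1 - λ` blocks of size `k`, and since
every `(t - 1)`-set is non-own, each block also carries a codeword differing from `x` only inside
it. These `r - 1` codewords differ from `x` on pairwise disjoint sets, so in each coordinate at least
`r - 2` of them agree with `x`: a focus, contradicting focal-freeness. Hence at most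
`m(n, n - t, λ)` of the `t`-sets are non-own.
-/

open Finset

/-- A code `C ⊆ [q]^n` is `r`-focal-free if it contains no `r` distinct vectors
`x 0, ..., x (r-1)` such that in every coordinate, at least `r - 2` of
`x 1, ..., x (r-1)` agree with the focus `x 0`. -/
def IsFocalFreeCode (r n q : ℕ) (C : Finset (Fin n → Fin q)) : Prop :=
  ¬ ∃ (x₀ : Fin n → Fin q) (x : Fin (r - 1) → (Fin n → Fin q)), x₀ ∈ C ∧ (∀ j, x j ∈ C) ∧
      Function.Injective x ∧ (∀ j, x j ≠ x₀) ∧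
      ∀ i : Fin n, r - 2 ≤ (Finset.univ.filter fun j : Fin (r - 1) => x j i = x₀ i).card

/-- `matchNum n s lam` is the maximum number of edges of an `s`-uniform hypergraph
on `n` vertices containing no `lam` pairwise disjoint edges. -/
noncomputable def matchNum (n s lam : ℕ) : ℕ :=
  sSup {c | ∃ G : Finset (Finset (Fin n)), (∀ e ∈ G, e.card = s) ∧
    (¬ ∃ M : Finset (Finset (Fin n)), M ⊆ G ∧ M.card = lam ∧
      (M : Set (Finset (Fin n))).Pairwise Disjoint) ∧ G.card = c}

open Function

theorem threshold_decomposition {n r lam t : ℕ} (hlam1 : 1 ≤ lam) (hlam2 : lam ≤ r - 1)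
    (hlam : (n + lam) % (r - 1) = 0) (ht : t = ((r - 2) * n + r - 2) / (r - 1)) :
    t ≤ n ∧ n = lam * (n - t) + (r - 1 - lam) * (n - t + 1) := by
  obtain ⟨l, rfl⟩ : ∃ l, lam = l + 1 := ⟨lam - 1, by omega⟩
  obtain ⟨m, rfl⟩ : ∃ m, r = l + m + 2 := ⟨r - l - 2, by omega⟩
  obtain ⟨k, hk⟩ := Nat.dvd_of_mod_eq_zero hlam
  rw [Nat.add_sub_cancel, show (l + m) * n + (l + m + 2) - 2 = (l + m) * (n + 1) by ring_nf; omega,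
    show l + m + 2 - 1 = l + m + 1 by omega] at *
  obtain ⟨k, rfl⟩ : ∃ k', k = k' + 1 := ⟨k - 1, by rcases k with _ | _ <;> simp_all⟩
  obtain rfl : n = (l + m + 1) * k + m := by linarith
  obtain rfl : t = (l + m) * k + m := by
    rw [ht]
    refine Nat.div_eq_of_lt_le ?_ ?_ <;> nlinarith
  have hnt : (l + m + 1) * k + m - ((l + m) * k + m) = k := by
    rw [Nat.add_sub_add_right, add_mul, one_mul, Nat.add_sub_cancel_left]
  rw [hnt, show l + m + 1 - (l + 1) = m by omega]
  exact ⟨by nlinarith, by ring⟩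

theorem Finset.exists_pairwise_disjoint_subsets_card_eq {α : Type*} {a k : ℕ} {R : Finset α}
    (hR : #R = a * k) :
    ∃ f : Fin a → Finset α, (∀ j, f j ⊆ R) ∧ (∀ j, #(f j) = k) ∧ Pairwise (Disjoint on f) := by
  let e : Fin a × Fin k ↪ α :=
    (finProdFinEquiv.trans ((finCongr hR.symm).trans R.equivFin.symm)).toEmbedding.trans
      (Embedding.subtype _)
  refine ⟨fun j => univ.map ((Embedding.sectR j (Fin k)).trans e), ?_, ?_, ?_⟩
  · intro j i hi
    obtain ⟨p, -, rfl⟩ := mem_map.1 hi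
    simp [e]
  · simp
  · intro j j' hjj'
    refine disjoint_left.2 fun i hi hi' => hjj' ?_
    obtain ⟨p, -, rfl⟩ := mem_map.1 hi
    obtain ⟨p', -, hp'⟩ := mem_map.1 hi'
    exact congrArg Prod.fst (e.injective hp').symm

theorem card_le_matchNum {n s lam : ℕ} {G : Finset (Finset (Fin n))} (hG : ∀ e ∈ G, #e = s)
    (hG_free : ¬ ∃ M : Finset (Finset (Fin n)), M ⊆ G ∧ #M = lam ∧
      (M : Set (Finset (Fin n))).Pairwise Disjoint) :
    #G ≤ matchNum n s lam :=
  le_csSup ⟨Fintype.card (Finset (Fin n)), by rintro _ ⟨G', -, -, rfl⟩; exact card_le_univ G'⟩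
    ⟨G, hG, hG_free, rfl⟩

namespace IsFocalFreeCode

variable {r n q : ℕ} {C : Finset (Fin n → Fin q)} {x : Fin n → Fin q}

theorem not_pairwise_disjoint (hC : IsFocalFreeCode r n q C) (hx : x ∈ C)
    {ι : Type*} [Fintype ι] (hι : Fintype.card ι = r - 1) {w : ι → Fin n → Fin q}
    (hwC : ∀ j, w j ∈ C) (hwx : ∀ j, w j ≠ x) {A : ι → Finset (Fin n)}
    (hwA : ∀ j, ∀ i ∉ A j, w j i = x i) : ¬ Pairwise (Disjoint on A) := by
  intro hA
  have agree : ∀ ⦃j j'⦄, j ≠ j' → ∀ i, w j i = x i ∨ w j' i = x i := fun j j' h i => by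
    by_cases hi : i ∈ A j
    · exact .inr (hwA j' i (disjoint_left.1 (hA h) hi))
    · exact .inl (hwA j i hi)
  let e := Fintype.equivFinOfCardEq hι
  refine hC ⟨x, w ∘ e.symm, hx, fun j => hwC _, fun j j' h => ?_, fun j => hwx _, fun i => ?_⟩
  · by_contra hjj'
    refine hwx (e.symm j) (funext fun i => ?_)
    rcases agree (e.symm.injective.ne hjj') i with h' | h'
    · exact h'
    · exact (congrFun h i).trans h'
  · have hbad : #(univ.filter fun j => ¬ (w ∘ e.symm) j i = x i) ≤ 1 := by
      refine card_le_one.2 fun j hj j' hj' => ?_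
      by_contra hjj'
      simp only [mem_filter, mem_univ, true_and, comp_apply] at hj hj'
      rcases agree (e.symm.injective.ne hjj') i with h | h
      · exact hj h
      · exact hj' h
    have := card_filter_add_card_filter_not (s := univ) (fun j => (w ∘ e.symm) j i = x i)
    simp only [card_univ, Fintype.card_fin] at this
    omega

theorem not_pairwise_disjoint_of_nonown {s a : ℕ} (hC : IsFocalFreeCode r n q C) (hx : x ∈ C)
    (hno : ∀ T : Finset (Fin n), #T = n - (s + 1) → ∃ y ∈ C, y ≠ x ∧ ∀ i ∈ T, y i = x i)
    {M : Finset (Finset (Fin n))} (hMs : ∀ S ∈ M, #S = s)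
    (hM : ∀ S ∈ M, ∃ y ∈ C, y ≠ x ∧ ∀ i ∉ S, y i = x i)
    (hn : n = #M * s + a * (s + 1)) (hr : #M + a = r - 1) :
    ¬ (M : Set (Finset (Fin n))).Pairwise Disjoint := by
  intro hM_disj
  have hU : #(M.biUnion id)ᶜ = a * (s + 1) := by
    rw [card_compl, card_biUnion (t := id) hM_disj, sum_const_nat (f := fun S => #(id S)) hMs,
      Fintype.card_fin]
    omega
  obtain ⟨B, hBU, hB, hB_disj⟩ := Finset.exists_pairwise_disjoint_subsets_card_eq hU
  choose y hyC hyx hyM using fun S : M => hM S S.2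
  choose z hzC hzx hzB using fun j => hno (B j)ᶜ (by rw [card_compl, hB, Fintype.card_fin])
  refine hC.not_pairwise_disjoint hx (ι := M ⊕ Fin a) (w := Sum.elim y z)
    (A := Sum.elim Subtype.val B) (by simp [hr]) (Sum.forall.2 ⟨hyC, hzC⟩)
    (Sum.forall.2 ⟨hyx, hzx⟩) ?_ ?_
  · rintro (S | j) i hi
    · exact hyM S i hi
    · exact hzB j i (by simpa using hi)
  · have mixed : ∀ (S : M) j, Disjoint S.1 (B j) := fun S j =>
      disjoint_left.2 fun i hiS hiB =>
        (mem_compl.1 (hBU j hiB)) (mem_biUnion.2 ⟨S, S.2, hiS⟩)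
    rintro (S | j) (S' | j') h
    · exact hM_disj S.2 S'.2 (Subtype.coe_injective.ne fun h' => h (by rw [h']))
    · exact mixed S j'
    · exact (mixed S' j).symm
    · exact hB_disj fun h' => h (by rw [h'])

end IsFocalFreeCode

theorem many_own_t_subsequences_general {n q r t lam : ℕ}
    (ht : t = ((r - 2) * n + r - 2) / (r - 1))
    (hlam1 : 1 ≤ lam) (hlam2 : lam ≤ r - 1) (hlam : (n + lam) % (r - 1) = 0)
    (C : Finset (Fin n → Fin q)) (hfree : IsFocalFreeCode r n q C)
    (x : Fin n → Fin q) (hx : x ∈ C)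
    (hno : ∀ T : Finset (Fin n), T.card = t - 1 →
      ∃ y ∈ C, y ≠ x ∧ ∀ i ∈ T, y i = x i) :
    n.choose t - matchNum n (n - t) lam ≤
      ((Finset.univ.powersetCard t).filter fun T : Finset (Fin n) =>
        ∀ y ∈ C, y ≠ x → ∃ i ∈ T, y i ≠ x i).card := by
  obtain ⟨htn, hn⟩ := threshold_decomposition hlam1 hlam2 hlam ht
  set G := ((univ.powersetCard t).filter fun T : Finset (Fin n) =>
    ¬ ∀ y ∈ C, y ≠ x → ∃ i ∈ T, y i ≠ x i).image compl
  have hG_card : #G + #((univ.powersetCard t).filter fun T : Finset (Fin n) =>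
      ∀ y ∈ C, y ≠ x → ∃ i ∈ T, y i ≠ x i) = n.choose t := by
    rw [card_image_of_injective _ compl_injective, add_comm, card_filter_add_card_filter_not,
      card_powersetCard, card_univ, Fintype.card_fin]
  have hG_edge : ∀ S ∈ G, #S = n - t ∧ ∃ y ∈ C, y ≠ x ∧ ∀ i ∉ S, y i = x i := by
    simp only [G, mem_image, mem_filter, mem_powersetCard, subset_univ, true_and]
    rintro _ ⟨T, ⟨hT, hT_own⟩, rfl⟩
    push Not at hT_own
    exact ⟨by rw [card_compl, hT, Fintype.card_fin], by simpa using hT_own⟩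
  have hG_le : #G ≤ matchNum n (n - t) lam :=
    card_le_matchNum (fun S hS => (hG_edge S hS).1) fun ⟨M, hMG, hM, hM_disj⟩ =>
      hfree.not_pairwise_disjoint_of_nonown (a := r - 1 - lam) hx (fun T hT => hno T (by omega))
        (fun S hS => (hG_edge S (hMG hS)).1) (fun S hS => (hG_edge S (hMG hS)).2)
        (by rw [hM]; exact hn) (by omega) hM_disj
  omega

/-- Every codeword of an r-focal-free code with no own (t-1)-subsequence has
many own t-subsequences. -/
theorem many_own_t_subsequences {n q r t lam : ℕ} (hr : 3 ≤ r) (hn : 2 ≤ n)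
    (ht : t = ((r - 2) * n + r - 2) / (r - 1))
    (hlam1 : 1 ≤ lam) (hlam2 : lam ≤ r - 1) (hlam : (n + lam) % (r - 1) = 0)
    (C : Finset (Fin n → Fin q)) (hfree : IsFocalFreeCode r n q C)
    (x : Fin n → Fin q) (hx : x ∈ C)
    (hno : ∀ T : Finset (Fin n), T.card = t - 1 →
      ∃ y ∈ C, y ≠ x ∧ ∀ i ∈ T, y i = x i) :
    n.choose t - matchNum n (n - t) lam ≤
      ((Finset.univ.powersetCard t).filter fun T : Finset (Fin n) =>
        ∀ y ∈ C, y ≠ x → ∃ i ∈ T, y i ≠ x i).card :=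
  many_own_t_subsequences_general ht hlam1 hlam2 hlam C hfree x hx hno
end
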